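/- For all sufficiently large n, A_{n+1}/A_n >= 2 * A_n/A_{n-1}, where A_n is the number of labeled DAGs on n vertices. -/

import Mathlib

open Filter Finset

/-- A directed graph (given by its edge relation) is acyclic iff no vertex lies on a
directed cycle, i.e. the transitive closure is irreflexive. -/
def DigraphAcyclic {V : Type*} (g : V → V → Prop) : Prop :=
  ∀ a, ¬ Relation.TransGen g a a

/-- The number of labeled DAGs on `n` vertices. -/
noncomputable def dagCount (n : ℕ) : ℕ :=
  Nat.card {g : Fin n → Fin n → Bool // DigraphAcyclic fun x y => g x y = true}

/-- The number of connected labeled DAGs on `n` vertices (connected means the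
underlying undirected graph is connected). -/
noncomputable def connDagCount (n : ℕ) : ℕ :=
  Nat.card {g : Fin n → Fin n → Bool //
    (DigraphAcyclic fun x y => g x y = true) ∧
    ∀ a b : Fin n, Relation.ReflTransGen (fun x y => g x y = true ∨ g y x = true) a b}

/-!
Deleting the sources of a DAG and applying inclusion–exclusion over the set of sources gives
Robinson's recurrence `∑ₖ (-1)ᵏ C(n,k) 2^(k(n-k)) A_(n-k) = 0` for `n ≥ 1`. Writing
`A_n = n! 2^C(n,2) a_n`, it becomes `∑ₖ (-1)ᵏ c_k a_(n-k) = 0` with `c_k = 1 / (k! 2^C(k,2))`,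
coefficients that decay super-exponentially. Hence `r_n = a_n / a_(n-1)` is an alternating sum
`∑ₖ (-1)^(k+1) c_k a_(n-k) / a_(n-1)` dominated by its first four terms. A strong induction keeps
`r_n` in `[16/25, 1]` (and below `7/10` from `n = 3` on, which the first terms need), so
`a_(n-k) / a_(n-1) ≤ (25/16)^(k-1)`; a second induction shows that the increments decay
geometrically, `|r_(n+1) - r_n| ≤ 2/5 (19/20)^n`, because perturbing the `r_m` perturbs the
lagged ratios only by weights `c_k (k-1) (25/16)^k (20/19)^k` of total mass below `9/10`.
Finally `A_(n+1) / A_n = (n+1) 2^n r_(n+1)`, so the claim is `n r_n ≤ (n+1) r_(n+1)`, that is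
`r_n + (n+1)(r_(n+1) - r_n) ≥ 0`, which holds as soon as `(n+1)(19/20)^n` is small.
-/

open scoped Nat

section Combinatorics

variable {V W : Type*}

lemma DigraphAcyclic.comap {g : W → W → Prop} (hg : DigraphAcyclic g) (f : V → W) :
    DigraphAcyclic fun x y => g (f x) (f y) :=
  fun a ha => hg (f a) (ha.lift f fun _ _ h => h)

def acyclicEquivOfEquiv (e : V ≃ W) :
    {g : V → V → Bool // DigraphAcyclic fun x y => g x y = true} ≃
      {g : W → W → Bool // DigraphAcyclic fun x y => g x y = true} :=
  (e.arrowCongr (e.arrowCongr (Equiv.refl Bool))).subtypeEquiv fun g =>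
    ⟨fun hg => by simpa using hg.comap e.symm, fun hg => by simpa using hg.comap e⟩

lemma card_acyclic_eq_dagCount [Fintype V] :
    Nat.card {g : V → V → Bool // DigraphAcyclic fun x y => g x y = true} =
      dagCount (Fintype.card V) :=
  Nat.card_congr (acyclicEquivOfEquiv (Fintype.equivFin V))

lemma dagCount_pos (n : ℕ) : 0 < dagCount n :=
  Nat.card_pos_iff.2 ⟨⟨⟨fun _ _ => false, fun _ h => by cases h <;> contradiction⟩⟩, inferInstance⟩

section Glue

variable [DecidableEq V] (T : Finset V)

def glue (c : T → {x // x ∉ T} → Bool) (h : {x // x ∉ T} → {x // x ∉ T} → Bool) (x y : V) :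
    Bool :=
  if hy : y ∈ T then false else if hx : x ∈ T then c ⟨x, hx⟩ ⟨y, hy⟩ else h ⟨x, hx⟩ ⟨y, hy⟩

variable {T} {c : T → {x // x ∉ T} → Bool} {h : {x // x ∉ T} → {x // x ∉ T} → Bool}

lemma not_mem_of_glue {x y : V} (hxy : glue T c h x y = true) : y ∉ T := by
  intro hy
  simp [glue, hy] at hxy

lemma glue_of_not_mem {x y : V} (hx : x ∉ T) (hy : y ∉ T) :
    glue T c h x y = h ⟨x, hx⟩ ⟨y, hy⟩ := by
  simp [glue, hx, hy]

lemma transGen_glue {x y : V} (hxy : Relation.TransGen (fun x y => glue T c h x y = true) x y)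
    (hx : x ∉ T) : ∃ hy : y ∉ T, Relation.TransGen (fun u v => h u v = true) ⟨x, hx⟩ ⟨y, hy⟩ := by
  induction hxy with
  | single hxy =>
    have hy := not_mem_of_glue hxy
    exact ⟨hy, .single (by rwa [glue_of_not_mem hx hy] at hxy)⟩
  | tail _ hbc ih =>
    obtain ⟨hb, hxb⟩ := ih
    have hc := not_mem_of_glue hbc
    exact ⟨hc, hxb.tail (by rwa [glue_of_not_mem hb hc] at hbc)⟩

lemma DigraphAcyclic.glue (hh : DigraphAcyclic fun x y => h x y = true) :
    DigraphAcyclic fun x y => glue T c h x y = true := by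
  intro a ha
  -- the last edge of the cycle enters `a`, so `a ∉ T`
  have haT : a ∉ T := by
    obtain ⟨b, -, hba⟩ := Relation.TransGen.tail'_iff.1 ha
    exact not_mem_of_glue hba
  obtain ⟨_, haa⟩ := transGen_glue ha haT
  exact hh _ haa

end Glue

variable [Fintype V]

def sources (g : V → V → Bool) : Finset V := {a | ∀ x, g x a = false}

@[simp] lemma mem_sources {g : V → V → Bool} {a : V} : a ∈ sources g ↔ ∀ x, g x a = false := by
  simp [sources]

lemma sources_nonempty [Nonempty V] {g : V → V → Bool}
    (hg : DigraphAcyclic fun x y => g x y = true) : (sources g).Nonempty := by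
  let r : V → V → Prop := Relation.TransGen fun x y => g x y = true
  have : IsTrans V r := ⟨fun _ _ _ => .trans⟩
  have : Std.Irrefl r := ⟨hg⟩
  obtain ⟨a, -, ha⟩ := (Finite.wellFounded_of_trans_of_irrefl r).has_min Set.univ
    (Set.univ_nonempty (α := V))
  exact ⟨a, mem_sources.2 fun x => by simpa using fun hx => ha x trivial (.single hx)⟩

variable [DecidableEq V] (T : Finset V)

def acyclicSourcesEquiv :
    {g : V → V → Bool // (DigraphAcyclic fun x y => g x y = true) ∧ T ⊆ sources g} ≃
      (T → {x // x ∉ T} → Bool) ×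
        {h : {x // x ∉ T} → {x // x ∉ T} → Bool // DigraphAcyclic fun x y => h x y = true} where
  toFun g := (fun t x => g.1 t x, ⟨fun u v => g.1 u v, g.2.1.comap Subtype.val⟩)
  invFun p := ⟨glue T p.1 p.2.1, p.2.2.glue, fun t ht => mem_sources.2 fun x => by simp [glue, ht]⟩
  left_inv g := by
    ext x y
    by_cases hy : y ∈ T
    · simpa [glue, hy] using (mem_sources.1 (g.2.2 hy) x).symm
    · by_cases hx : x ∈ T <;> simp [glue, hx, hy]
  right_inv p := by
    ext t x <;> simp [glue, x.2, t.2]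

lemma card_acyclic_sources_superset :
    Nat.card {g : V → V → Bool // (DigraphAcyclic fun x y => g x y = true) ∧ T ⊆ sources g} =
      2 ^ (#T * (Fintype.card V - #T)) * dagCount (Fintype.card V - #T) := by
  have hcompl : Fintype.card {x // x ∉ T} = Fintype.card V - #T := by
    simp [Fintype.card_subtype_compl]
  rw [Nat.card_congr (acyclicSourcesEquiv T), Nat.card_prod, card_acyclic_eq_dagCount, hcompl,
    Nat.card_eq_fintype_card, Fintype.card_fun, Fintype.card_fun, Fintype.card_bool, hcompl,
    Fintype.card_coe, ← pow_mul, mul_comm (Fintype.card V - #T)]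

-- Inclusion–exclusion over the vertices that are sources; a nonempty DAG always has one.
lemma sum_neg_one_pow_mul_card_acyclic_sources_superset [Nonempty V] :
    ∑ T ∈ (univ : Finset V).powerset, (-1 : ℤ) ^ #T *
      Nat.card {g : V → V → Bool // (DigraphAcyclic fun x y => g x y = true) ∧ T ⊆ sources g} =
      0 := by
  classical
  let S : V → Finset {g : V → V → Bool // DigraphAcyclic fun x y => g x y = true} :=
    fun a => {g | a ∈ sources g.1}
  have hempty : univ.inf (fun a => (S a)ᶜ) = ∅ := by
    ext g
    obtain ⟨a, ha⟩ := sources_nonempty g.2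
    simpa [S, Finset.mem_inf] using ⟨a, mem_sources.1 ha⟩
  have hcard (T : Finset V) : #(T.inf S) =
      Nat.card {g : V → V → Bool // (DigraphAcyclic fun x y => g x y = true) ∧ T ⊆ sources g} := by
    rw [← Nat.card_eq_finsetCard]
    refine (Nat.card_congr ?_)
    refine (Equiv.subtypeEquivRight fun g => ?_).trans (Equiv.subtypeSubtypeEquivSubtypeInter _ _)
    simp [S, Finset.mem_inf, subset_iff]
  simpa [hempty, hcard] using (inclusion_exclusion_card_inf_compl univ S).symm

end Combinatorics

theorem sum_neg_one_pow_mul_dagCount_eq_zero {n : ℕ} (hn : 0 < n) :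
    ∑ k ∈ range (n + 1), (-1 : ℤ) ^ k * n.choose k * 2 ^ (k * (n - k)) * dagCount (n - k) = 0 := by
  have : Nonempty (Fin n) := ⟨⟨0, hn⟩⟩
  have h := sum_neg_one_pow_mul_card_acyclic_sources_superset (V := Fin n)
  simp only [card_acyclic_sources_superset, Fintype.card_fin] at h
  rw [sum_powerset_apply_card
    (fun k => (-1 : ℤ) ^ k * ((2 ^ (k * (n - k)) * dagCount (n - k) : ℕ) : ℤ)),
    card_univ, Fintype.card_fin] at h
  rw [← h]
  refine sum_congr rfl fun k _ => ?_
  push_cast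
  ring

lemma dagCount_zero : dagCount 0 = 1 :=
  Nat.card_eq_one_iff_unique.2 ⟨inferInstance, ⟨⟨isEmptyElim, isEmptyElim⟩⟩⟩

lemma choose_two_add (a b : ℕ) : (a + b).choose 2 = a.choose 2 + a * b + b.choose 2 := by
  induction b with
  | zero => simp
  | succ b ih =>
    rw [← add_assoc, Nat.choose_succ_succ', ih, Nat.choose_succ_succ', Nat.choose_one_right,
      Nat.choose_one_right]
    ring

noncomputable def dagWeight (n : ℕ) : ℝ := dagCount n / (n ! * 2 ^ n.choose 2)

noncomputable def dagCoeff (k : ℕ) : ℝ := 1 / (k ! * 2 ^ k.choose 2)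

lemma dagWeight_pos (n : ℕ) : 0 < dagWeight n := by
  have := dagCount_pos n
  unfold dagWeight; positivity

lemma dagCoeff_pos (k : ℕ) : 0 < dagCoeff k := by
  unfold dagCoeff; positivity

lemma dagWeight_zero : dagWeight 0 = 1 := by simp [dagWeight, dagCount_zero]

lemma dagCoeff_zero : dagCoeff 0 = 1 := by simp [dagCoeff]

lemma dagCoeff_succ (k : ℕ) : dagCoeff (k + 1) = dagCoeff k / ((k + 1) * 2 ^ k) := by
  simp only [dagCoeff, Nat.factorial_succ, Nat.choose_succ_succ', Nat.choose_one_right, pow_add]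
  push_cast
  field_simp

lemma sum_neg_one_pow_mul_dagCoeff_mul_dagWeight {n : ℕ} (hn : 0 < n) :
    ∑ k ∈ range (n + 1), (-1 : ℝ) ^ k * dagCoeff k * dagWeight (n - k) = 0 := by
  have h := congrArg (fun z : ℤ => (z : ℝ) / (n ! * 2 ^ n.choose 2))
    (sum_neg_one_pow_mul_dagCount_eq_zero hn)
  simp only [Int.cast_sum, sum_div, Int.cast_zero, zero_div] at h
  rw [← h]
  refine sum_congr rfl fun k hk => ?_
  have hkn : k ≤ n := Nat.lt_succ_iff.1 (mem_range.1 hk)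
  obtain ⟨m, rfl⟩ := Nat.exists_eq_add_of_le hkn
  have hfact := Nat.choose_mul_factorial_mul_factorial hkn
  rw [Nat.add_sub_cancel_left] at *
  rw [dagCoeff, dagWeight, ← hfact, choose_two_add]
  push_cast
  have := Nat.choose_pos hkn
  field_simp
  ring

lemma dagWeight_eq_sum {n : ℕ} (hn : 0 < n) :
    dagWeight n = ∑ k ∈ Icc 1 n, (-1 : ℝ) ^ (k + 1) * dagCoeff k * dagWeight (n - k) := by
  have h := sum_neg_one_pow_mul_dagCoeff_mul_dagWeight hn
  rw [range_eq_Ico, sum_eq_sum_Ico_succ_bot (by omega : 0 < n + 1), zero_add,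
    Ico_add_one_right_eq_Icc] at h
  simp only [pow_succ, pow_zero, dagCoeff_zero, Nat.sub_zero, mul_neg_one, neg_mul,
    sum_neg_distrib] at h ⊢
  linarith

lemma dagWeight_one : dagWeight 1 = 1 := by
  simp [dagWeight_eq_sum, dagCoeff, dagWeight_zero]

lemma dagWeight_two : dagWeight 2 = 3 / 4 := by
  rw [dagWeight_eq_sum two_pos, show Icc 1 2 = {1, 2} from rfl]
  norm_num [dagCoeff, dagWeight_zero, dagWeight_one]

lemma dagWeight_three : dagWeight 3 = 25 / 48 := by
  rw [dagWeight_eq_sum three_pos, show Icc 1 3 = {1, 2, 3} from rfl]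
  norm_num [dagCoeff, Nat.factorial, Nat.choose, dagWeight_zero, dagWeight_one, dagWeight_two]

lemma dagWeight_four : dagWeight 4 = 181 / 512 := by
  rw [dagWeight_eq_sum four_pos, show Icc 1 4 = {1, 2, 3, 4} from rfl]
  norm_num [dagCoeff, Nat.factorial, Nat.choose, dagWeight_zero, dagWeight_one, dagWeight_two,
    dagWeight_three]

lemma dagWeight_five : dagWeight 5 = 29281 / 122880 := by
  rw [dagWeight_eq_sum (by norm_num), show Icc 1 5 = {1, 2, 3, 4, 5} from rfl]
  norm_num [dagCoeff, Nat.factorial, Nat.choose, dagWeight_zero, dagWeight_one, dagWeight_two,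
    dagWeight_three, dagWeight_four]

lemma dagCoeff_five : dagCoeff 5 = 1 / 122880 := by
  norm_num [dagCoeff, Nat.factorial, Nat.choose]

lemma sum_dagCoeff_mul_pow_le (n : ℕ) :
    ∑ k ∈ Icc 5 n, dagCoeff k * k * (125 / 76) ^ k ≤ 1 / 1000 := by
  set f : ℕ → ℝ := fun k => dagCoeff k * k * (125 / 76) ^ k
  have hhalf (k : ℕ) (hk : 2 ≤ k) : f (k + 1) ≤ 1 / 2 * f k := by
    have hk0 : (k : ℝ) ≠ 0 := by positivity
    have hf : f (k + 1) = f k * (125 / 76 / (k * 2 ^ k)) := by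
      simp only [f, dagCoeff_succ]
      push_cast
      field_simp
      ring
    have hk2 : (8 : ℝ) ≤ k * 2 ^ k := by
      have : (2 : ℝ) ^ 2 ≤ 2 ^ k := pow_le_pow_right₀ one_le_two hk
      have : (2 : ℝ) ≤ k := by exact_mod_cast hk
      nlinarith
    have hfk : 0 ≤ f k := by have := dagCoeff_pos k; positivity
    rw [hf, mul_comm (1 / 2)]
    exact mul_le_mul_of_nonneg_left (by rw [div_le_iff₀ (by positivity)]; linarith) hfk
  have hgeom (i : ℕ) : f (5 + i) ≤ (1 / 2) ^ i * f 5 :=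
    le_geom (u := fun i => f (5 + i)) (by norm_num) i fun k _ => hhalf (5 + k) (by omega)
  calc ∑ k ∈ Icc 5 n, f k = ∑ i ∈ range (n + 1 - 5), f (5 + i) := by
        rw [← Ico_add_one_right_eq_Icc, sum_Ico_eq_sum_range]
    _ ≤ ∑ i ∈ range (n + 1 - 5), (1 / 2) ^ i * f 5 := sum_le_sum fun i _ => hgeom i
    _ ≤ 2 * f 5 := by
        rw [← sum_mul]
        exact mul_le_mul_of_nonneg_right (sum_geometric_two_le _) (by norm_num [f, dagCoeff_five])
    _ ≤ 1 / 1000 := by norm_num [f, dagCoeff_five]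

lemma abs_sum_neg_one_pow_mul_dagCoeff_le {n : ℕ} {x : ℕ → ℝ}
    (hx : ∀ k ∈ Icc 5 n, |x k| ≤ k * (125 / 76) ^ k) :
    |∑ k ∈ Icc 5 n, (-1 : ℝ) ^ (k + 1) * dagCoeff k * x k| ≤ 1 / 1000 := by
  refine (abs_sum_le_sum_abs _ _).trans ((sum_le_sum fun k hk => ?_).trans
    (sum_dagCoeff_mul_pow_le n))
  rw [abs_mul, abs_mul, abs_pow, abs_neg, abs_one, one_pow, one_mul,
    abs_of_pos (dagCoeff_pos k), mul_assoc]
  exact mul_le_mul_of_nonneg_left (hx k hk) (dagCoeff_pos k).le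

noncomputable def dagRatio (n : ℕ) : ℝ := dagWeight n / dagWeight (n - 1)

noncomputable def dagLagRatio (n k : ℕ) : ℝ := dagWeight (n - k) / dagWeight (n - 1)

lemma dagLagRatio_one (n : ℕ) : dagLagRatio n 1 = 1 := div_self (dagWeight_pos _).ne'

lemma dagLagRatio_succ (n k : ℕ) :
    dagLagRatio n (k + 1) = dagLagRatio n k / dagRatio (n - k) := by
  have := dagWeight_pos (n - k)
  rw [dagLagRatio, dagLagRatio, dagRatio, Nat.sub_sub]
  field_simp

lemma dagRatio_eq_sum {n : ℕ} (hn : 0 < n) :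
    dagRatio n = ∑ k ∈ Icc 1 n, (-1 : ℝ) ^ (k + 1) * dagCoeff k * dagLagRatio n k := by
  simp only [dagRatio, dagWeight_eq_sum hn, sum_div, dagLagRatio, mul_div_assoc]

lemma sum_Icc_one_eq_head_add_tail (f : ℕ → ℝ) {n : ℕ} (hn : 4 ≤ n) :
    ∑ k ∈ Icc 1 n, f k = f 1 + f 2 + f 3 + f 4 + ∑ k ∈ Icc 5 n, f k := by
  have hsplit : Icc 1 n = Icc 1 4 ∪ Icc 5 n := by ext; simp; omega
  rw [hsplit, sum_union (disjoint_left.2 fun k => by simp; omega),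
    show Icc 1 4 = {1, 2, 3, 4} from rfl]
  simp [add_assoc]

lemma dagRatio_eq_head_add_tail {n : ℕ} (hn : 4 ≤ n) :
    dagRatio n = 1 - dagLagRatio n 2 / 4 + dagLagRatio n 3 / 48 - dagLagRatio n 4 / 1536 +
      ∑ k ∈ Icc 5 n, (-1 : ℝ) ^ (k + 1) * dagCoeff k * dagLagRatio n k := by
  rw [dagRatio_eq_sum (by omega), sum_Icc_one_eq_head_add_tail _ hn]
  norm_num [dagCoeff, Nat.factorial, Nat.choose, dagLagRatio_one]
  ring

lemma dagRatio_one : dagRatio 1 = 1 := by simp [dagRatio, dagWeight_one, dagWeight_zero]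
lemma dagRatio_two : dagRatio 2 = 3 / 4 := by norm_num [dagRatio, dagWeight_two, dagWeight_one]
lemma dagRatio_three : dagRatio 3 = 25 / 36 := by
  norm_num [dagRatio, dagWeight_three, dagWeight_two]
lemma dagRatio_four : dagRatio 4 = 543 / 800 := by
  norm_num [dagRatio, dagWeight_four, dagWeight_three]
lemma dagRatio_five : dagRatio 5 = 29281 / 43440 := by
  norm_num [dagRatio, dagWeight_five, dagWeight_four]

lemma dagLagRatio_bounds_of_forall_lt {n : ℕ}
    (h : ∀ m, 1 ≤ m → m < n → 16 / 25 ≤ dagRatio m ∧ dagRatio m ≤ 1)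
    {k : ℕ} (hk : 1 ≤ k) (hkn : k ≤ n) :
    1 ≤ dagLagRatio n k ∧ dagLagRatio n k ≤ (25 / 16) ^ (k - 1) := by
  induction k, hk using Nat.le_induction with
  | base => simp [dagLagRatio_one]
  | succ k hk ih =>
    obtain ⟨hl, hu⟩ := ih (by omega)
    obtain ⟨hrl, hru⟩ := h (n - k) (by omega) (by omega)
    rw [dagLagRatio_succ, le_div_iff₀ (by linarith), div_le_iff₀ (by linarith),
      Nat.add_sub_cancel, ← pow_sub_one_mul (by omega)]
    constructor <;> nlinarith [pow_pos (show (0 : ℝ) < 25 / 16 by norm_num) (k - 1)]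

lemma dagRatio_bounds_of_forall_lt {n : ℕ} (hn : 5 ≤ n)
    (h : ∀ m, 1 ≤ m → m < n → 16 / 25 ≤ dagRatio m ∧ dagRatio m ≤ 1)
    (h₁ : dagRatio (n - 1) ≤ 7 / 10) (h₂ : dagRatio (n - 2) ≤ 7 / 10) :
    16 / 25 ≤ dagRatio n ∧ dagRatio n ≤ 7 / 10 := by
  have h₁' := (h (n - 1) (by omega) (by omega)).1
  have h₂' := (h (n - 2) (by omega) (by omega)).1
  have hρ₂ : 10 / 7 ≤ dagLagRatio n 2 ∧ dagLagRatio n 2 ≤ 25 / 16 := by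
    rw [dagLagRatio_succ, dagLagRatio_one, le_div_iff₀ (by linarith), div_le_iff₀ (by linarith)]
    constructor <;> linarith
  have hρ₃ : 100 / 49 ≤ dagLagRatio n 3 ∧ dagLagRatio n 3 ≤ 625 / 256 := by
    rw [dagLagRatio_succ, le_div_iff₀ (by linarith), div_le_iff₀ (by linarith)]
    constructor <;> linarith
  have hρ₄ := dagLagRatio_bounds_of_forall_lt h (k := 4) (by norm_num) (by omega)
  have htail := abs_le.1 <| abs_sum_neg_one_pow_mul_dagCoeff_le (n := n)
    (x := dagLagRatio n) fun k hk => by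
      obtain ⟨hk5, hkn⟩ := mem_Icc.1 hk
      obtain ⟨hl, hu⟩ := dagLagRatio_bounds_of_forall_lt h (by omega) hkn
      calc |dagLagRatio n k| = dagLagRatio n k := abs_of_pos (by linarith)
        _ ≤ (25 / 16) ^ k := hu.trans (pow_le_pow_right₀ (by norm_num) (Nat.sub_le k 1))
        _ ≤ (125 / 76) ^ k := pow_le_pow_left₀ (by norm_num) (by norm_num) k
        _ ≤ k * (125 / 76) ^ k :=
          le_mul_of_one_le_left (by positivity) (by exact_mod_cast (by omega : 1 ≤ k))
  rw [dagRatio_eq_head_add_tail (by omega)]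
  norm_num at hρ₄
  constructor <;> linarith [hρ₂.1, hρ₂.2, hρ₃.1, hρ₃.2]

theorem dagRatio_bounds {n : ℕ} (hn : 1 ≤ n) :
    16 / 25 ≤ dagRatio n ∧ dagRatio n ≤ 1 ∧ (3 ≤ n → dagRatio n ≤ 7 / 10) := by
  induction n using Nat.strong_induction_on with
  | _ n ih =>
  rcases (show n ≤ 4 ∨ 5 ≤ n by omega) with hn4 | hn5
  · interval_cases n <;>
      norm_num [dagRatio_one, dagRatio_two, dagRatio_three, dagRatio_four]
  · have h (m) (hm : 1 ≤ m) (hmn : m < n) := ih m hmn hm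
    obtain ⟨hl, hu⟩ := dagRatio_bounds_of_forall_lt hn5
      (fun m hm hmn => ⟨(h m hm hmn).1, (h m hm hmn).2.1⟩)
      ((h (n - 1) (by omega) (by omega)).2.2 (by omega))
      ((h (n - 2) (by omega) (by omega)).2.2 (by omega))
    exact ⟨hl, by linarith, fun _ => hu⟩

lemma le_dagRatio {n : ℕ} (hn : 1 ≤ n) : 16 / 25 ≤ dagRatio n := (dagRatio_bounds hn).1

lemma dagRatio_le_one {n : ℕ} (hn : 1 ≤ n) : dagRatio n ≤ 1 := (dagRatio_bounds hn).2.1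

lemma dagLagRatio_bounds {n k : ℕ} (hk : 1 ≤ k) (hkn : k ≤ n) :
    1 ≤ dagLagRatio n k ∧ dagLagRatio n k ≤ (25 / 16) ^ (k - 1) :=
  dagLagRatio_bounds_of_forall_lt (fun _ hm _ => ⟨le_dagRatio hm, dagRatio_le_one hm⟩) hk hkn

lemma abs_div_sub_div_le {x x' y y' : ℝ} (hy : 16 / 25 ≤ y) (hy' : 16 / 25 ≤ y') :
    |x / y - x' / y'| ≤ 25 / 16 * |x - x'| + (25 / 16) ^ 2 * |x'| * |y' - y| := by
  have hy₀ : 0 < y⁻¹ := inv_pos.2 (by linarith)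
  have hy'₀ : 0 < y'⁻¹ := inv_pos.2 (by linarith)
  have hy₁ : y⁻¹ ≤ 25 / 16 := inv_le_of_inv_le₀ (by norm_num) (by norm_num [hy])
  have hy'₁ : y'⁻¹ ≤ 25 / 16 := inv_le_of_inv_le₀ (by norm_num) (by norm_num [hy'])
  have e : x / y - x' / y' = (x - x') * y⁻¹ + x' * (y' - y) * (y⁻¹ * y'⁻¹) := by
    field_simp
    ring
  calc |x / y - x' / y'| ≤ |(x - x') * y⁻¹| + |x' * (y' - y) * (y⁻¹ * y'⁻¹)| :=
        e ▸ abs_add_le _ _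
    _ = |x - x'| * y⁻¹ + |x'| * |y' - y| * (y⁻¹ * y'⁻¹) := by
        rw [abs_mul, abs_mul, abs_mul, abs_of_pos hy₀, abs_of_pos (mul_pos hy₀ hy'₀)]
    _ ≤ |x - x'| * (25 / 16) + |x'| * |y' - y| * (25 / 16 * (25 / 16)) := by gcongr
    _ = _ := by ring

lemma abs_dagLagRatio_succ_sub_le {n k : ℕ} (hk : 1 ≤ k) (hkn : k ≤ n) :
    |dagLagRatio (n + 1) k - dagLagRatio n k| ≤
      (25 / 16) ^ k * ∑ j ∈ Ico 1 k, |dagRatio (n - j + 1) - dagRatio (n - j)| := by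
  induction k, hk using Nat.le_induction with
  | base => simp [dagLagRatio_one]
  | succ k hk ih =>
    have hρ := dagLagRatio_bounds hk (by omega : k ≤ n)
    have hpow : (25 / 16 : ℝ) ^ (k + 1) = (25 / 16) ^ 2 * (25 / 16) ^ (k - 1) := by
      rw [← pow_add]; congr 1; omega
    rw [dagLagRatio_succ, dagLagRatio_succ, sum_Ico_succ_top hk, mul_add,
      show n + 1 - k = n - k + 1 by omega]
    refine (abs_div_sub_div_le (le_dagRatio (by omega)) (le_dagRatio (by omega))).trans ?_
    rw [abs_of_pos (by linarith : 0 < dagLagRatio n k), abs_sub_comm (dagRatio (n - k))]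
    calc _ ≤ 25 / 16 * ((25 / 16) ^ k *
            ∑ j ∈ Ico 1 k, |dagRatio (n - j + 1) - dagRatio (n - j)|) +
          (25 / 16) ^ 2 * (25 / 16) ^ (k - 1) * |dagRatio (n - k + 1) - dagRatio (n - k)| := by
          gcongr
          · exact ih (by omega)
          · exact hρ.2
      _ = _ := by rw [← hpow, pow_succ']; ring

lemma twentyFive_div_sixteen_pow_eq (k : ℕ) :
    (25 / 16 : ℝ) ^ k = (19 / 20) ^ k * (125 / 76) ^ k := by
  rw [← mul_pow]; norm_num

lemma dagCoeff_mul_pow_le {k : ℕ} (hk : 5 ≤ k) : dagCoeff k * k * (125 / 76) ^ k ≤ 1 / 1000 :=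
  (single_le_sum (f := fun k => dagCoeff k * k * (125 / 76) ^ k)
    (fun k _ => by have := dagCoeff_pos k; positivity) (mem_Icc.2 ⟨hk, le_rfl⟩)).trans
    (sum_dagCoeff_mul_pow_le k)

lemma sum_dagCoeff_mul_sub_one_mul_pow_le {n : ℕ} (hn : 4 ≤ n) :
    ∑ k ∈ Icc 1 n, dagCoeff k * ((k - 1) * (125 / 76) ^ k) ≤ 9 / 10 := by
  have htail : ∑ k ∈ Icc 5 n, dagCoeff k * ((k - 1) * (125 / 76) ^ k) ≤ 1 / 1000 :=
    (sum_le_sum fun k _ => by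
      have := dagCoeff_pos k
      have := pow_pos (show (0 : ℝ) < 125 / 76 by norm_num) k
      nlinarith).trans (sum_dagCoeff_mul_pow_le n)
  rw [sum_Icc_one_eq_head_add_tail _ hn]
  norm_num [dagCoeff, Nat.factorial, Nat.choose] at htail ⊢
  linarith

lemma dagRatio_succ_sub_eq {n : ℕ} (hn : 0 < n) :
    dagRatio (n + 1) - dagRatio n = (-1) ^ n * dagCoeff (n + 1) * dagLagRatio (n + 1) (n + 1) +
      ∑ k ∈ Icc 1 n, (-1) ^ (k + 1) * dagCoeff k * (dagLagRatio (n + 1) k - dagLagRatio n k) := by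
  rw [dagRatio_eq_sum n.succ_pos, dagRatio_eq_sum hn, sum_Icc_succ_top (by omega)]
  simp only [mul_sub, sum_sub_distrib, pow_succ]
  ring

lemma dagCoeff_succ_mul_dagLagRatio_self_le {n : ℕ} (hn : 4 ≤ n) :
    dagCoeff (n + 1) * dagLagRatio (n + 1) (n + 1) ≤ 1 / 1000 * (19 / 20) ^ n := by
  have hρ := (dagLagRatio_bounds (n := n + 1) (k := n + 1) (by omega) le_rfl).2
  rw [Nat.add_sub_cancel, twentyFive_div_sixteen_pow_eq] at hρ
  have hpow : (125 / 76 : ℝ) ^ n ≤ (n + 1 : ℕ) * (125 / 76) ^ (n + 1) := by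
    have := pow_pos (show (0 : ℝ) < 125 / 76 by norm_num) n
    have : (1 : ℝ) ≤ (n + 1 : ℕ) := by exact_mod_cast Nat.succ_pos n
    rw [pow_succ]
    nlinarith
  calc _ ≤ dagCoeff (n + 1) * ((19 / 20) ^ n * ((n + 1 : ℕ) * (125 / 76) ^ (n + 1))) :=
        mul_le_mul_of_nonneg_left (hρ.trans (by gcongr)) (dagCoeff_pos _).le
    _ = (19 / 20) ^ n * (dagCoeff (n + 1) * (n + 1 : ℕ) * (125 / 76) ^ (n + 1)) := by ring
    _ ≤ (19 / 20) ^ n * (1 / 1000) := by gcongr; exact dagCoeff_mul_pow_le (by omega)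
    _ = _ := mul_comm _ _

lemma abs_dagLagRatio_succ_sub_le_of_forall_lt {n k : ℕ}
    (h : ∀ m, 1 ≤ m → m < n → |dagRatio (m + 1) - dagRatio m| ≤ 2 / 5 * (19 / 20) ^ m)
    (hk : 1 ≤ k) (hkn : k ≤ n) :
    |dagLagRatio (n + 1) k - dagLagRatio n k| ≤
      2 / 5 * (19 / 20) ^ (n + 1) * ((k - 1) * (125 / 76) ^ k) := by
  have hsum : ∑ j ∈ Ico 1 k, |dagRatio (n - j + 1) - dagRatio (n - j)| ≤
      (k - 1) * (2 / 5 * (19 / 20) ^ (n + 1 - k)) := by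
    calc _ ≤ ∑ j ∈ Ico 1 k, 2 / 5 * (19 / 20 : ℝ) ^ (n + 1 - k) := sum_le_sum fun j hj => by
            obtain ⟨hj1, hjk⟩ := mem_Ico.1 hj
            refine (h (n - j) (by omega) (by omega)).trans ?_
            exact mul_le_mul_of_nonneg_left
              (pow_le_pow_of_le_one (by norm_num) (by norm_num) (by omega)) (by norm_num)
      _ = _ := by rw [sum_const, Nat.card_Ico, nsmul_eq_mul, Nat.cast_sub hk, Nat.cast_one]
  have hpow : (19 / 20 : ℝ) ^ (n + 1) = (19 / 20) ^ (n + 1 - k) * (19 / 20) ^ k := by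
    rw [← pow_add, Nat.sub_add_cancel (by omega)]
  calc |dagLagRatio (n + 1) k - dagLagRatio n k|
        ≤ (25 / 16) ^ k * ((k - 1) * (2 / 5 * (19 / 20) ^ (n + 1 - k))) :=
        (abs_dagLagRatio_succ_sub_le hk hkn).trans (by gcongr)
    _ = _ := by rw [twentyFive_div_sixteen_pow_eq, hpow]; ring

theorem abs_dagRatio_succ_sub_le {n : ℕ} (hn : 1 ≤ n) :
    |dagRatio (n + 1) - dagRatio n| ≤ 2 / 5 * (19 / 20) ^ n := by
  induction n using Nat.strong_induction_on with
  | _ n ih =>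
  rcases (show n ≤ 4 ∨ 5 ≤ n by omega) with hn4 | hn5
  · interval_cases n <;>
      norm_num [dagRatio_one, dagRatio_two, dagRatio_three, dagRatio_four, dagRatio_five, abs_le]
  have hlast : |(-1) ^ n * dagCoeff (n + 1) * dagLagRatio (n + 1) (n + 1)| ≤
      1 / 1000 * (19 / 20) ^ n := by
    rw [abs_mul, abs_mul, abs_pow, abs_neg, abs_one, one_pow, one_mul,
      abs_of_pos (dagCoeff_pos _), abs_of_pos (by linarith [(dagLagRatio_bounds (n := n + 1)
        (k := n + 1) (by omega) le_rfl).1])]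
    exact dagCoeff_succ_mul_dagLagRatio_self_le (by omega)
  have hsum : |∑ k ∈ Icc 1 n, (-1) ^ (k + 1) * dagCoeff k *
      (dagLagRatio (n + 1) k - dagLagRatio n k)| ≤ 2 / 5 * (19 / 20) ^ (n + 1) * (9 / 10) := by
    refine (abs_sum_le_sum_abs _ _).trans ?_
    calc _ ≤ ∑ k ∈ Icc 1 n,
          dagCoeff k * (2 / 5 * (19 / 20) ^ (n + 1) * ((k - 1) * (125 / 76) ^ k)) :=
          sum_le_sum fun k hk => by
            obtain ⟨hk1, hkn⟩ := mem_Icc.1 hk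
            rw [abs_mul, abs_mul, abs_pow, abs_neg, abs_one, one_pow, one_mul,
              abs_of_pos (dagCoeff_pos _)]
            exact mul_le_mul_of_nonneg_left (abs_dagLagRatio_succ_sub_le_of_forall_lt
              (fun m hm hmn => ih m hmn hm) hk1 hkn) (dagCoeff_pos k).le
      _ = 2 / 5 * (19 / 20) ^ (n + 1) * ∑ k ∈ Icc 1 n, dagCoeff k * ((k - 1) * (125 / 76) ^ k) := by
          rw [mul_sum]; ring_nf
      _ ≤ _ := by gcongr; exact sum_dagCoeff_mul_sub_one_mul_pow_le (by omega)
  rw [dagRatio_succ_sub_eq (by omega)]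
  refine (abs_add_le _ _).trans ?_
  rw [pow_succ] at hsum
  linarith [pow_pos (show (0 : ℝ) < 19 / 20 by norm_num) n]

lemma dagCount_succ_div_dagCount (n : ℕ) :
    (dagCount (n + 1) : ℝ) / dagCount n = (n + 1) * 2 ^ n * dagRatio (n + 1) := by
  have := dagCount_pos n
  simp only [dagRatio, dagWeight, Nat.add_sub_cancel, Nat.factorial_succ,
    Nat.choose_succ_succ', Nat.choose_one_right, pow_add]
  push_cast
  field_simp

lemma eventually_mul_dagRatio_le :
    ∀ᶠ n : ℕ in atTop, n * dagRatio n ≤ (n + 1) * dagRatio (n + 1) := by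
  have hlim : Tendsto (fun n : ℕ => (n + 1 : ℝ) * (19 / 20) ^ n) atTop (nhds 0) := by
    simpa [add_mul] using (tendsto_self_mul_const_pow_of_lt_one (by norm_num) (by norm_num)).add
      (tendsto_pow_atTop_nhds_zero_of_lt_one (by norm_num : (0 : ℝ) ≤ 19 / 20) (by norm_num))
  filter_upwards [hlim.eventually_lt_const (show (0 : ℝ) < 8 / 5 by norm_num),
    eventually_ge_atTop 1] with n hsmall hn
  have hd := (abs_le.1 (abs_dagRatio_succ_sub_le hn)).1
  have hr := le_dagRatio hn
  have hn' : (0 : ℝ) ≤ n + 1 := by positivity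
  nlinarith [mul_le_mul_of_nonneg_left hd hn']

theorem dagCount_ratio_eventually_doubling :
    ∀ᶠ n : ℕ in atTop,
      (dagCount (n + 1) : ℝ) / dagCount n ≥ 2 * (dagCount n : ℝ) / dagCount (n - 1) := by
  filter_upwards [eventually_mul_dagRatio_le, eventually_ge_atTop 1] with n hstep hn
  obtain ⟨m, rfl⟩ := Nat.exists_eq_add_one_of_ne_zero (by omega : n ≠ 0)
  rw [Nat.add_sub_cancel, ge_iff_le, mul_div_assoc, dagCount_succ_div_dagCount,
    dagCount_succ_div_dagCount, pow_succ]
  push_cast at hstep ⊢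
  nlinarith [pow_pos (two_pos : (0 : ℝ) < 2) m]
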